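/- Let ρ > 0 and let V ∈ Sym(n) be positive semidefinite on the null space of a matrix E ∈ ℝ^{p×n} (i.e., Ez = 0 implies zᵀVz ≥ 0). Then there exists μ > 0 such that ρI + V + μEᵀE is positive definite. -/

import Mathlib

/-!
This is Finsler's lemma for `A = ρ I + V`, which is positive definite on `Null(E)`. On the unit
sphere the set where `zᵀ A z ≤ 0` is compact and misses `Null(E)`, so there `‖E z‖²` is bounded
below by some `m > 0` and `zᵀ A z` by some `M`; then `μ = (|M| + 1) / m` makes
`zᵀ (A + μ EᵀE) z` positive on the whole sphere, and homogeneity of quadratic forms does the rest.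
-/

open Matrix

theorem IsCompact.exists_pos_forall_pos_add_mul {X : Type*} [TopologicalSpace X] {K : Set X}
    (hK : IsCompact K) {f g : X → ℝ} (hf : Continuous f) (hg : Continuous g)
    (hg_nonneg : ∀ x ∈ K, 0 ≤ g x) (hfg : ∀ x ∈ K, g x = 0 → 0 < f x) :
    ∃ μ > 0, ∀ x ∈ K, 0 < f x + μ * g x := by
  set A := K ∩ f ⁻¹' Set.Iic 0
  have hA : IsCompact A := hK.inter_right (isClosed_Iic.preimage hf)
  obtain ⟨M, hM⟩ := hA.bddBelow_image hf.continuousOn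
  obtain ⟨m, hm, hgm⟩ := hA.exists_forall_le' hg.continuousOn (a := 0) fun x ⟨hxK, hfx⟩ ↦
    (hg_nonneg x hxK).lt_of_ne' fun hgx ↦ (hfg x hxK hgx).not_ge hfx
  have hμ : 0 < (|M| + 1) / m := by positivity
  refine ⟨(|M| + 1) / m, hμ, fun x hxK ↦ ?_⟩
  by_cases hfx : f x ≤ 0
  · have hxA : x ∈ A := ⟨hxK, hfx⟩
    have hMf : M ≤ f x := hM ⟨x, hxA, rfl⟩
    calc 0 < M + (|M| + 1) := by linarith [neg_abs_le M]
      _ = M + (|M| + 1) / m * m := by field_simp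
      _ ≤ f x + (|M| + 1) / m * g x := by gcongr; exact hgm x hxA
  · have := mul_nonneg hμ.le (hg_nonneg x hxK)
    linarith

theorem Matrix.continuous_dotProduct_mulVec_self {n : Type*} [Fintype n] (M : Matrix n n ℝ) :
    Continuous fun z : n → ℝ ↦ z ⬝ᵥ M *ᵥ z := by
  fun_prop

theorem Matrix.dotProduct_mulVec_smul_self {n : Type*} [Fintype n] (M : Matrix n n ℝ) (c : ℝ)
    (z : n → ℝ) :
    (c • z) ⬝ᵥ M *ᵥ (c • z) = c ^ 2 * (z ⬝ᵥ M *ᵥ z) := by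
  rw [mulVec_smul, dotProduct_smul, smul_dotProduct, smul_eq_mul, smul_eq_mul]
  ring

theorem Matrix.posDef_of_forall_norm_eq_one {n : Type*} [Fintype n] {M : Matrix n n ℝ}
    (hM : M.IsSymm) (h : ∀ z : n → ℝ, ‖z‖ = 1 → 0 < z ⬝ᵥ M *ᵥ z) : M.PosDef := by
  refine .of_dotProduct_mulVec_pos (isHermitian_iff_isSymm.mpr hM) fun z hz ↦ ?_
  have hz' : 0 < ‖z‖ := norm_pos_iff.mpr hz
  have hunit : ‖‖z‖⁻¹ • z‖ = 1 := by
    rw [norm_smul, norm_inv, norm_norm, inv_mul_cancel₀ hz'.ne']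
  have := dotProduct_mulVec_smul_self M ‖z‖ (‖z‖⁻¹ • z)
  rw [smul_inv_smul₀ hz'.ne'] at this
  rw [star_trivial, this]
  exact mul_pos (by positivity) (h _ hunit)

theorem Matrix.dotProduct_transpose_mul_self_mulVec {m n : Type*} [Fintype m] [Fintype n]
    (E : Matrix m n ℝ) (z : n → ℝ) : z ⬝ᵥ (Eᵀ * E) *ᵥ z = E *ᵥ z ⬝ᵥ E *ᵥ z := by
  rw [← mulVec_mulVec, dotProduct_mulVec, vecMul_transpose]

theorem Matrix.exists_posDef_add_smul_transpose_mul_self {m n : Type*} [Fintype m] [Fintype n]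
    {A : Matrix n n ℝ} (hA : A.IsSymm) (E : Matrix m n ℝ)
    (h : ∀ z : n → ℝ, z ≠ 0 → E *ᵥ z = 0 → 0 < z ⬝ᵥ A *ᵥ z) :
    ∃ μ : ℝ, 0 < μ ∧ (A + μ • (Eᵀ * E)).PosDef := by
  obtain ⟨μ, hμ, hpos⟩ := (isCompact_sphere (0 : n → ℝ) 1).exists_pos_forall_pos_add_mul
    A.continuous_dotProduct_mulVec_self (Eᵀ * E).continuous_dotProduct_mulVec_self
    (fun z _ ↦ by simpa [dotProduct_transpose_mul_self_mulVec] using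
      dotProduct_star_self_nonneg (E *ᵥ z))
    (fun z hz hEz ↦ by
      rw [dotProduct_transpose_mul_self_mulVec, dotProduct_self_eq_zero] at hEz
      exact h z (ne_zero_of_mem_sphere one_ne_zero ⟨z, hz⟩) hEz)
  have hEE : (Eᵀ * E).IsSymm := by rw [IsSymm, transpose_mul, transpose_transpose]
  refine ⟨μ, hμ, posDef_of_forall_norm_eq_one (hA.add (hEE.smul μ)) ?_⟩
  intro z hz
  simpa [add_mulVec, smul_mulVec, dotProduct_add] using hpos z (by simpa using hz)

theorem stmt_8 (n p : ℕ) (ρ : ℝ) (hρ : 0 < ρ)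
    (V : Matrix (Fin n) (Fin n) ℝ) (hV : V.IsSymm)
    (E : Matrix (Fin p) (Fin n) ℝ)
    (hnull : ∀ z : Fin n → ℝ, E.mulVec z = 0 → 0 ≤ z ⬝ᵥ V.mulVec z) :
    ∃ μ : ℝ, 0 < μ ∧ (ρ • (1 : Matrix (Fin n) (Fin n) ℝ) + V + μ • (E.transpose * E)).PosDef := by
  refine exists_posDef_add_smul_transpose_mul_self (isSymm_one.smul ρ |>.add hV) E
    fun z hz hEz ↦ ?_
  have hzz : 0 < z ⬝ᵥ z := by simpa using dotProduct_star_self_pos_iff.mpr hz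
  rw [add_mulVec, smul_mulVec, one_mulVec, dotProduct_add, dotProduct_smul, smul_eq_mul]
  nlinarith [hnull z hEz]
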